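/- Let n ≥ 1, 1 ≤ s ≤ n, and α_0, …, α_n > 0. Define C = (s − (n+1)/2)/(Σ_{i=0}^n 1/α_i) and c_α = (1/2 + C/α_0, …, 1/2 + C/α_n). Then Σ_{i=0}^n (c_α)_i = s, and there exists r > 0 such that q_α(v − c_α) = r for every v ∈ W(n+1,s) and q_α(u − c_α) > r for every u ∈ V_{n,s} \ W(n+1,s). In other words, J(n+1,s) is a Delaunay polytope of the point lattice V_{n,s} with respect to q_α, with circumcenter c_α. -/

import Mathlib

open Finset

noncomputable section

/-- The point lattice `V_{n,s} = {x ∈ ℤ^{n+1} : Σ x_i = s}`. -/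
def Vset (n s : ℕ) : Set (Fin (n+1) → ℝ) :=
  {x | (∀ i, ∃ m : ℤ, x i = m) ∧ ∑ i, x i = (s : ℝ)}

/-- The vertex set `W(n+1,s) = {x ∈ {0,1}^{n+1} : Σ x_i = s}`. -/
def Wset (n s : ℕ) : Set (Fin (n+1) → ℝ) :=
  {x | (∀ i, x i = 0 ∨ x i = 1) ∧ ∑ i, x i = (s : ℝ)}

/-- The quadratic form `q_α(x) = Σ α_i x_i²`. -/
def qForm {n : ℕ} (α : Fin (n+1) → ℝ) (x : Fin (n+1) → ℝ) : ℝ :=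
  ∑ i, α i * (x i) ^ 2

/-!
On the hyperplane `Σ x_i = s`, completing the square gives
`q_α(x - c_α) = Σ α_i (x_i - 1/2)² - t² / Σ α_i⁻¹` with `t = s - (n+1)/2`,
and for an integer `m` one has `(m - 1/2)² ≥ 1/4` with equality exactly when `m ∈ {0, 1}`.
Hence `r = Σ α_i / 4 - t² / Σ α_i⁻¹`, which is positive because `|t| < (n+1)/2`
and, by Cauchy–Schwarz, `(n+1)² ≤ Σ α_i · Σ α_i⁻¹`.
-/

theorem Int.cast_sub_half_sq (m : ℤ) :
    ((m : ℝ) - 1 / 2) ^ 2 = 1 / 4 + ((m * (m - 1) : ℤ) : ℝ) := by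
  push_cast; ring

theorem Int.one_quarter_le_cast_sub_half_sq (m : ℤ) :
    (1 : ℝ) / 4 ≤ ((m : ℝ) - 1 / 2) ^ 2 := by
  have : 0 ≤ m * (m - 1) := by
    rcases le_or_gt m 0 with h | h <;> nlinarith
  rw [Int.cast_sub_half_sq]
  have : (0 : ℝ) ≤ ((m * (m - 1) : ℤ) : ℝ) := by exact_mod_cast this
  linarith

theorem Int.one_quarter_lt_cast_sub_half_sq {m : ℤ} (h0 : m ≠ 0) (h1 : m ≠ 1) :
    (1 : ℝ) / 4 < ((m : ℝ) - 1 / 2) ^ 2 := by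
  have : 0 < m * (m - 1) := by
    rcases le_or_gt m 0 with h | h
    · exact mul_pos_of_neg_of_neg (by omega) (by omega)
    · exact mul_pos h (by omega)
  rw [Int.cast_sub_half_sq]
  have : (0 : ℝ) < ((m * (m - 1) : ℤ) : ℝ) := by exact_mod_cast this
  linarith

namespace Hypersimplex

variable {ι : Type*} [Fintype ι] (α : ι → ℝ)

def halfCenter (t : ℝ) (i : ι) : ℝ :=
  1 / 2 + t / (∑ j, (α j)⁻¹) / α i

theorem sum_halfCenter {t : ℝ} (hα : ∑ j, (α j)⁻¹ ≠ 0) :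
    ∑ i, halfCenter α t i = Fintype.card ι / 2 + t := by
  simp only [halfCenter, sum_add_distrib, sum_const, card_univ, nsmul_eq_mul]
  simp_rw [div_eq_mul_inv _ (α _), ← mul_sum, div_mul_cancel₀ _ hα]
  ring

variable {α}

theorem sum_mul_sq_sub_halfCenter (hα : ∀ i, α i ≠ 0) {t : ℝ} {x : ι → ℝ}
    (hx : ∑ i, (x i - 1 / 2) = t) :
    ∑ i, α i * (x i - halfCenter α t i) ^ 2
      = ∑ i, α i * (x i - 1 / 2) ^ 2 - t ^ 2 / ∑ j, (α j)⁻¹ := by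
  have hterm : ∀ i, α i * (x i - halfCenter α t i) ^ 2
      = α i * (x i - 1 / 2) ^ 2 - 2 * (t / ∑ j, (α j)⁻¹) * (x i - 1 / 2)
        + (t / ∑ j, (α j)⁻¹) ^ 2 * (α i)⁻¹ := by
    intro i
    rw [halfCenter]
    field_simp [hα i]
    ring
  simp only [hterm, sum_add_distrib, sum_sub_distrib, ← mul_sum, hx]
  generalize ∑ j, (α j)⁻¹ = S
  generalize ∑ i, α i * (x i - 1 / 2) ^ 2 = Q
  rcases eq_or_ne S 0 with rfl | hS
  · simp
  · field_simp
    ring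

theorem card_sq_le_sum_mul_sum_inv (hα : ∀ i, 0 < α i) :
    (Fintype.card ι : ℝ) ^ 2 ≤ (∑ i, α i) * ∑ i, (α i)⁻¹ := by
  simpa using sum_sq_le_sum_mul_sum_of_sq_le_mul univ (r := fun _ => (1 : ℝ))
    (fun i _ => (hα i).le) (fun i _ => (inv_pos.2 (hα i)).le)
    (fun i _ => by simp [mul_inv_cancel₀ (hα i).ne'])

theorem sq_div_sum_inv_lt_sum_div_four (hα : ∀ i, 0 < α i) {t : ℝ}
    (ht : |t| < Fintype.card ι / 2) :
    t ^ 2 / ∑ i, (α i)⁻¹ < (∑ i, α i) / 4 := by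
  have : Nonempty ι := Fintype.card_pos_iff.1 <| by
    exact_mod_cast (show (0 : ℝ) < Fintype.card ι by linarith [abs_nonneg t])
  have hS : 0 < ∑ i, (α i)⁻¹ := sum_pos (fun i _ => inv_pos.2 (hα i)) univ_nonempty
  have hcard := card_sq_le_sum_mul_sum_inv hα
  have ht2 : t ^ 2 < (Fintype.card ι / 2 : ℝ) ^ 2 := sq_lt_sq' (abs_lt.1 ht).1 (abs_lt.1 ht).2
  rw [div_lt_iff₀ hS]
  nlinarith

theorem sum_mul_sq_sub_half_of_binary {x : ι → ℝ} (hx : ∀ i, x i = 0 ∨ x i = 1) :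
    ∑ i, α i * (x i - 1 / 2) ^ 2 = (∑ i, α i) / 4 := by
  rw [sum_div]
  refine sum_congr rfl fun i _ => ?_
  rcases hx i with h | h <;> rw [h] <;> ring

theorem sum_div_four_lt_sum_mul_sq_sub_half (hα : ∀ i, 0 < α i) {x : ι → ℝ}
    (hint : ∀ i, ∃ m : ℤ, x i = m) (hx : ∃ j, x j ≠ 0 ∧ x j ≠ 1) :
    (∑ i, α i) / 4 < ∑ i, α i * (x i - 1 / 2) ^ 2 := by
  rw [sum_div]
  obtain ⟨j, hj0, hj1⟩ := hx
  refine sum_lt_sum (fun i _ => ?_) ⟨j, mem_univ j, ?_⟩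
  · obtain ⟨m, hm⟩ := hint i
    rw [hm, div_eq_mul_one_div]
    exact mul_le_mul_of_nonneg_left m.one_quarter_le_cast_sub_half_sq (hα i).le
  · obtain ⟨m, hm⟩ := hint j
    rw [hm, div_eq_mul_one_div]
    refine mul_lt_mul_of_pos_left (Int.one_quarter_lt_cast_sub_half_sq ?_ ?_) (hα j)
    · rintro rfl; exact hj0 (by simpa using hm)
    · rintro rfl; exact hj1 (by simpa using hm)

end Hypersimplex

open Hypersimplex in
theorem hypersimplex_is_delaunay (n s : ℕ) (hs1 : 1 ≤ s) (hsn : s ≤ n)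
    (α : Fin (n+1) → ℝ) (hα : ∀ i, 0 < α i) :
    let C : ℝ := ((s : ℝ) - ((n : ℝ) + 1) / 2) / (∑ i, (α i)⁻¹)
    let cα : Fin (n+1) → ℝ := fun i => 1 / 2 + C / α i
    (∑ i, cα i = (s : ℝ)) ∧
    ∃ r : ℝ, 0 < r ∧
      (∀ v ∈ Wset n s, qForm α (v - cα) = r) ∧
      (∀ u ∈ Vset n s \ Wset n s, r < qForm α (u - cα)) := by
  intro C cα
  set t : ℝ := s - ((n : ℝ) + 1) / 2
  have hcα : cα = halfCenter α t := rfl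
  have hq : ∀ x : Fin (n+1) → ℝ, ∑ i, x i = s →
      qForm α (x - cα) = ∑ i, α i * (x i - 1 / 2) ^ 2 - t ^ 2 / ∑ i, (α i)⁻¹ := by
    refine fun x hx => sum_mul_sq_sub_halfCenter (fun i => (hα i).ne') ?_
    simp only [sum_sub_distrib, hx, sum_const, card_univ, Fintype.card_fin, nsmul_eq_mul]
    push_cast
    ring
  refine ⟨?_, (∑ i, α i) / 4 - t ^ 2 / ∑ i, (α i)⁻¹, ?_, ?_, ?_⟩
  · rw [hcα, sum_halfCenter α (sum_pos (fun i _ => inv_pos.2 (hα i)) univ_nonempty).ne']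
    simp only [Fintype.card_fin, t]
    push_cast
    ring
  · refine sub_pos.2 (sq_div_sum_inv_lt_sum_div_four hα (abs_lt.2 ⟨?_, ?_⟩)) <;>
    · simp only [t, Fintype.card_fin, Nat.cast_add, Nat.cast_one]
      have hs1' : (1 : ℝ) ≤ s := by exact_mod_cast hs1
      have hsn' : (s : ℝ) ≤ n := by exact_mod_cast hsn
      linarith
  · rintro v ⟨hv01, hv⟩
    rw [hq v hv, sum_mul_sq_sub_half_of_binary hv01]
  · rintro u ⟨⟨hint, hu⟩, hnotW⟩
    have hout : ∃ j, u j ≠ 0 ∧ u j ≠ 1 := by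
      by_contra! h
      exact hnotW ⟨fun i => (em (u i = 0)).imp_right (h i), hu⟩
    rw [hq u hu]
    linarith [sum_div_four_lt_sum_mul_sq_sub_half hα hint hout]
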